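/- arXiv:1802.00480 — 4 statements merged into one kernel-verified Lean document; each statement's English description precedes it below -/
import Mathlib

section
/- A 2×2 complex matrix H is PT-symmetric (i.e., H·P·T = P·T·conj(H) for matrices P, T with P² = I, T·conj(T) = I, P·T = T·conj(P)) only if H is similar to a real matrix. -/
/-!
With `S = P * T` one has `S * conj S = 1`, so `v ↦ S * conj v` is an antilinear involution, and
PT-symmetry says that `H` commutes with it. If the columns of an invertible `Ψ` are fixed by this
involution (`S * conj Ψ = Ψ`), then `conj (Ψ⁻¹ * H * Ψ) = Ψ⁻¹ * H * Ψ`. Such a `Ψ` is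
`c • 1 + conj c • S` for a generic `c = t + i` with `t` real.
-/

open Matrix ComplexConjugate Polynomial

namespace Matrix

section StarRing

variable {n R : Type*} [Fintype n] [DecidableEq n] [CommRing R] [StarRing R]

theorem mul_mul_map_conj_mul_eq_one {P T : Matrix n n R} (hP : P * P = 1)
    (hT : T * T.map conj = 1) (hPT : P * T = T * P.map conj) :
    P * T * (P * T).map conj = 1 :=
  calc P * T * (P * T).map conj = P * (T * P.map conj) * T.map conj := by
        rw [Matrix.map_mul]; noncomm_ring
    _ = 1 := by rw [← hPT, ← mul_assoc, hP, one_mul, hT]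

theorem mul_map_conj_smul_one_add_conj_smul {S : Matrix n n R} (hS : S * S.map conj = 1)
    (c : R) : S * (c • 1 + conj c • S).map conj = c • 1 + conj c • S := by
  have hmap : (c • 1 + conj c • S).map conj = conj c • (1 : Matrix n n R) + c • S.map conj := by
    ext i j
    simp [one_apply, apply_ite]
  rw [hmap, Matrix.mul_add, Matrix.mul_smul, Matrix.mul_smul, mul_one, hS, add_comm]

theorem map_conj_inv_mul_mul_eq {S H Ψ : Matrix n n R} (hH : H * S = S * H.map conj)
    (hΨ : S * Ψ.map conj = Ψ) (hΨdet : IsUnit Ψ.det) :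
    (Ψ⁻¹ * H * Ψ).map conj = Ψ⁻¹ * H * Ψ := by
  have hΨinv : Ψ.map conj * (Ψ⁻¹).map conj = 1 := by
    rw [← Matrix.map_mul, mul_nonsing_inv _ hΨdet, Matrix.map_one _ (map_zero _) (_root_.map_one _)]
  have key : Ψ * (Ψ⁻¹ * H * Ψ).map conj = H * Ψ :=
    calc Ψ * (Ψ⁻¹ * H * Ψ).map conj
        = S * Ψ.map conj * ((Ψ⁻¹).map conj * H.map conj * Ψ.map conj) := by
          rw [hΨ, Matrix.map_mul, Matrix.map_mul]
      _ = S * (Ψ.map conj * (Ψ⁻¹).map conj) * H.map conj * Ψ.map conj := by noncomm_ring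
      _ = H * (S * Ψ.map conj) := by rw [hΨinv, mul_one, ← hH, mul_assoc]
      _ = H * Ψ := by rw [hΨ]
  rw [← nonsing_inv_mul_cancel_left _ ((Ψ⁻¹ * H * Ψ).map conj) hΨdet, key, mul_assoc]

end StarRing

theorem finite_setOf_det_smul_add_eq_zero {n K : Type*} [Fintype n] [DecidableEq n]
    [Field K] {A B : Matrix n n K} {x₀ : K} (h : (x₀ • A + B).det ≠ 0) :
    {x : K | (x • A + B).det = 0}.Finite := by
  set p : K[X] := ((X : K[X]) • A.map C + B.map C).det
  have hp : ∀ x, p.eval x = (x • A + B).det := fun x => by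
    rw [← coe_evalRingHom, RingHom.map_det]
    congr 1
    ext i j
    simp [mul_comm x]
  refine (finite_setOfPred_isRoot (p := p) fun hp0 => h ?_).subset fun x hx => ?_
  · rw [← hp, hp0, eval_zero]
  · simpa [IsRoot, hp] using hx

theorem exists_isUnit_det_mul_map_conj_eq {n : Type*} [Fintype n] [DecidableEq n]
    {S : Matrix n n ℂ} (hS : S * S.map conj = 1) :
    ∃ Ψ : Matrix n n ℂ, IsUnit Ψ.det ∧ S * Ψ.map conj = Ψ := by
  -- `c • 1 + conj c • S` at `c = t + i` is affine in `t`, and at `t = -i` it is `-2i • S`.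
  have hdet : ((-Complex.I) • (1 + S) + Complex.I • (1 - S)).det ≠ 0 := by
    have hS2 : (-Complex.I) • (1 + S) + Complex.I • (1 - S) = (-2 * Complex.I) • S := by module
    rw [hS2, det_smul]
    exact mul_ne_zero (pow_ne_zero _ (by simp)) (isUnit_det_of_right_inverse hS).ne_zero
  obtain ⟨-, ⟨t, rfl⟩, ht⟩ := ((Set.infinite_range_of_injective Complex.ofReal_injective).sdiff
    (finite_setOf_det_smul_add_eq_zero hdet)).nonempty
  refine ⟨_, isUnit_iff_ne_zero.mpr ?_, mul_map_conj_smul_one_add_conj_smul hS (t + Complex.I)⟩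
  have hΨ : ((t + Complex.I) • 1 + conj (t + Complex.I) • S : Matrix n n ℂ) =
      (t : ℂ) • (1 + S) + Complex.I • (1 - S) := by
    simp only [map_add, Complex.conj_ofReal, Complex.conj_I]
    module
  rwa [hΨ]

theorem im_eq_zero_of_map_conj_eq {m n : Type*} {M : Matrix m n ℂ} (h : M.map conj = M)
    (i : m) (j : n) : (M i j).im = 0 :=
  Complex.conj_eq_iff_im.mp (congrFun (congrFun h i) j)

end Matrix

theorem pt_symmetric_similar_real
    (P T H : Matrix (Fin 2) (Fin 2) ℂ)
    (hP : P * P = 1)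
    (hT : T * T.map (starRingEnd ℂ) = 1)
    (hPT : P * T = T * P.map (starRingEnd ℂ))
    (hH : H * (P * T) = (P * T) * H.map (starRingEnd ℂ)) :
    ∃ (Ψ R : Matrix (Fin 2) (Fin 2) ℂ), IsUnit Ψ.det ∧
      (∀ i j, (R i j).im = 0) ∧ Ψ⁻¹ * H * Ψ = R := by
  obtain ⟨Ψ, hΨdet, hΨ⟩ := exists_isUnit_det_mul_map_conj_eq (mul_mul_map_conj_mul_eq_one hP hT hPT)
  exact ⟨Ψ, Ψ⁻¹ * H * Ψ, hΨdet, im_eq_zero_of_map_conj_eq (map_conj_inv_mul_mul_eq hH hΨ hΨdet),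
    rfl⟩
end

section
/- If H is diagonalizable with all eigenvalues real, then there exists a positive definite Hermitian matrix η with H†η = ηH. -/
open Matrix
open scoped ComplexOrder

theorem real_diagonalizable_implies_posdef_metric
    (n : ℕ) (H : Matrix (Fin n) (Fin n) ℂ)
    (h : ∃ (Ψ : Matrix (Fin n) (Fin n) ℂ) (d : Fin n → ℝ),
      IsUnit Ψ.det ∧ Ψ⁻¹ * H * Ψ = Matrix.diagonal (fun i => (d i : ℂ))) :
    ∃ η : Matrix (Fin n) (Fin n) ℂ, η.PosDef ∧ η.IsHermitian ∧
      Hᴴ * η = η * H := by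
  obtain ⟨Ψ, d, hu, hdiag⟩ := h
  have hinv : Ψ * Ψ⁻¹ = 1 := mul_nonsing_inv Ψ hu
  have hinv' : Ψ⁻¹ * Ψ = 1 := nonsing_inv_mul Ψ hu
  set D : Matrix (Fin n) (Fin n) ℂ := Matrix.diagonal (fun i => (d i : ℂ)) with hD
  have hH : H = Ψ * D * Ψ⁻¹ := by
    calc H = Ψ * (Ψ⁻¹ * H * Ψ) * Ψ⁻¹ := by
            rw [show Ψ * (Ψ⁻¹ * H * Ψ) * Ψ⁻¹ = (Ψ * Ψ⁻¹) * H * (Ψ * Ψ⁻¹) by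
              simp only [Matrix.mul_assoc], hinv, one_mul, mul_one]
      _ = Ψ * D * Ψ⁻¹ := by rw [hdiag]
  set A := Ψ⁻¹ with hA
  have hDH : Dᴴ = D := by
    have hs : (star fun i => ((d i : ℝ) : ℂ)) = fun i => ((d i : ℝ) : ℂ) :=
      funext fun i => Complex.conj_ofReal _
    rw [hD, diagonal_conjTranspose, hs]
  refine ⟨Aᴴ * A, ?_, isHermitian_conjTranspose_mul_self A, ?_⟩
  · refine ⟨isHermitian_conjTranspose_mul_self A, fun x hx => ?_⟩
    have hsd := posSemidef_conjTranspose_mul_self A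
    rcases lt_or_eq_of_le (hsd.2 x) with hlt | heq
    · exact hlt
    · exfalso
      have h0 : (Aᴴ * A) *ᵥ x = 0 := (hsd.dotProduct_mulVec_zero_iff x).mp
          (by simpa [dotProduct, mulVec, Finsupp.sum_fintype, Finset.mul_sum, mul_assoc] using heq.symm)
      have hAx : A *ᵥ x = 0 := by
        have : star x ⬝ᵥ (Aᴴ * A) *ᵥ x = 0 := by
          simpa [dotProduct, mulVec, Finsupp.sum_fintype, Finset.mul_sum, mul_assoc] using heq.symm
        rw [← mulVec_mulVec, dotProduct_mulVec, vecMul_conjTranspose, star_star,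
          dotProduct_star_self_eq_zero] at this
        exact this
      have : x = 0 := by
        have := congrArg (fun v => Ψ *ᵥ v) hAx
        exact Finsupp.coe_eq_zero.mp (by simpa [mulVec_mulVec, hinv] using this)
      exact hx this
  · have key : Hᴴ * (Aᴴ * A) = Aᴴ * D * A ∧ (Aᴴ * A) * H = Aᴴ * D * A := by
      constructor
      · rw [hH]
        calc (Ψ * D * A)ᴴ * (Aᴴ * A) = Aᴴ * D * (Ψᴴ * Aᴴ) * A := by
              simp only [conjTranspose_mul, hDH, Matrix.mul_assoc]
          _ = Aᴴ * D * A := by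
              rw [← conjTranspose_mul, hA, hinv', conjTranspose_one, mul_one]
      · rw [hH]
        calc (Aᴴ * A) * (Ψ * D * A) = Aᴴ * (A * Ψ) * (D * A) := by
              simp only [Matrix.mul_assoc]
          _ = Aᴴ * D * A := by rw [hA, hinv', mul_one, Matrix.mul_assoc]
    rw [key.1, key.2]
end

section
/- With H as in the non-diagonalizable case (Hψ₁ = aψ₁, Hψ₂ = aψ₂ + ψ₁, a real), for any state ρ = Σᵢⱼ ρᵢⱼ|ψᵢ⟩⟨ψⱼ|, the evolved state ρ(t) = exp(−itH)ρexp(−itH)† satisfies ρ₁₂(t) + ρ₂₁(t) = ρ₁₂ + ρ₂₁ for all t, even though ρ₁₂(t) ≠ ρ₁₂ in general. -/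
open Matrix

/-- exp of `x • 1 + N` for a square-zero matrix `N`. -/
lemma exp_smul_one_add_sq_zero (x : ℂ) (N : Matrix (Fin 2) (Fin 2) ℂ) (hNN : N * N = 0) :
    NormedSpace.exp (x • (1 : Matrix (Fin 2) (Fin 2) ℂ) + N)
      = Complex.exp x • ((1 : Matrix (Fin 2) (Fin 2) ℂ) + N) := by
  letI : SeminormedRing (Matrix (Fin 2) (Fin 2) ℂ) := Matrix.linftyOpSemiNormedRing
  letI : NormedRing (Matrix (Fin 2) (Fin 2) ℂ) := Matrix.linftyOpNormedRing
  letI : NormedAlgebra ℂ (Matrix (Fin 2) (Fin 2) ℂ) := Matrix.linftyOpNormedAlgebra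
  letI : NormedAlgebra ℚ (Matrix (Fin 2) (Fin 2) ℂ) := Matrix.linftyOpNormedAlgebra
  have hcomm : Commute (x • (1 : Matrix (Fin 2) (Fin 2) ℂ)) N :=
    (Commute.one_left N).smul_left x
  rw [Matrix.exp_add_of_commute _ _ hcomm]
  have h1 : NormedSpace.exp (x • (1 : Matrix (Fin 2) (Fin 2) ℂ))
      = Complex.exp x • (1 : Matrix (Fin 2) (Fin 2) ℂ) := by
    have hx : x • (1 : Matrix (Fin 2) (Fin 2) ℂ)
        = algebraMap ℂ (Matrix (Fin 2) (Fin 2) ℂ) x := by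
      rw [Algebra.algebraMap_eq_smul_one]
    erw [hx, ← NormedSpace.algebraMap_exp_comm, Algebra.algebraMap_eq_smul_one,
      ← Complex.exp_eq_exp_ℂ]
  have h2 : NormedSpace.exp N = 1 + N := by
    rw [NormedSpace.exp_eq_tsum ℂ]
    have hpow : ∀ n : ℕ, 2 ≤ n → N ^ n = 0 := by
      intro n hn
      obtain ⟨m, rfl⟩ := Nat.exists_eq_add_of_le hn
      rw [pow_add, pow_two, hNN, zero_mul]
    have h : (∑' n : ℕ, ((n.factorial : ℂ))⁻¹ • N ^ n)
        = ∑ n ∈ Finset.range 2, ((n.factorial : ℂ))⁻¹ • N ^ n := by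
      refine tsum_eq_sum ?_
      intro n hn
      rw [hpow n (by simp at hn; omega), smul_zero]
    simpa [Finset.sum_range_succ] using h
  rw [h1, h2, Matrix.smul_mul, Matrix.one_mul]

theorem jordan_block_sum_of_superposition_conserved
    (H : Matrix (Fin 2) (Fin 2) ℂ) (ψ : Fin 2 → (Fin 2 → ℂ)) (a : ℝ)
    (hbasis : LinearIndependent ℂ ψ)
    (h1 : H *ᵥ ψ 0 = (a : ℂ) • ψ 0)
    (h2 : H *ᵥ ψ 1 = (a : ℂ) • ψ 1 + ψ 0)
    (t : ℝ) (c c' : Fin 2 → Fin 2 → ℂ)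
    (hevol : (NormedSpace.exp ((-(Complex.I * t)) • H)) *
          (∑ i, ∑ j, c i j • vecMulVec (ψ i) (star (ψ j))) *
          (NormedSpace.exp ((-(Complex.I * t)) • H))ᴴ
        = ∑ i, ∑ j, c' i j • vecMulVec (ψ i) (star (ψ j))) :
    c' 0 1 + c' 1 0 = c 0 1 + c 1 0 := by
  classical
  set s : ℂ := -(Complex.I * t) with hs_def
  set N : Matrix (Fin 2) (Fin 2) ℂ := H - (a : ℂ) • 1 with hN_def
  -- action of N on the basis
  have hN0 : N *ᵥ ψ 0 = 0 := by
    simp [hN_def, sub_mulVec, h1, smul_mulVec]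
  have hN1 : N *ᵥ ψ 1 = ψ 0 := by
    simp [hN_def, sub_mulVec, h2, smul_mulVec]
  -- S: matrix whose columns are the ψ i
  set S : Matrix (Fin 2) (Fin 2) ℂ := Matrix.of (fun k i => ψ i k) with hS_def
  have hSunit : IsUnit S := by
    rw [← Matrix.linearIndependent_cols_iff_isUnit]
    convert hbasis using 1 <;> rfl
  -- N is square-zero
  have hNN : N * N = 0 := by
    have hb : ∀ i, (N * N) *ᵥ ψ i = 0 := by
      intro i
      fin_cases i <;> rw [← Matrix.mulVec_mulVec] <;> simp [hN0, hN1]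
    have hcard : Fintype.card (Fin 2) = Module.finrank ℂ (Fin 2 → ℂ) := by simp
    let B := basisOfLinearIndependentOfCardEqFinrank hbasis hcard
    have hB : ∀ i, B i = ψ i := fun i =>
      congrFun (coe_basisOfLinearIndependentOfCardEqFinrank hbasis hcard) i
    have h0 : Matrix.toLin' (N * N) = Matrix.toLin' 0 := by
      apply Module.Basis.ext B
      intro i
      rw [hB]
      simp only [Matrix.toLin'_apply, hb i, Matrix.zero_mulVec]
    exact Matrix.toLin'.injective h0
  -- the exponential
  have hsNsq : (s • N) * (s • N) = 0 := by
    rw [Matrix.smul_mul, Matrix.mul_smul, hNN]; simp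
  have hHsum : s • H = (s * a) • (1 : Matrix (Fin 2) (Fin 2) ℂ) + s • N := by
    rw [hN_def, smul_sub, smul_smul]
    abel
  have hexpH : NormedSpace.exp (s • H)
      = Complex.exp (s * a) • ((1 : Matrix (Fin 2) (Fin 2) ℂ) + s • N) := by
    rw [hHsum, exp_smul_one_add_sq_zero _ _ hsNsq]
  set lam : ℂ := Complex.exp (s * a) with hlam_def
  set T : Matrix (Fin 2) (Fin 2) ℂ := lam • !![1, s; 0, 1] with hT_def
  set E : Matrix (Fin 2) (Fin 2) ℂ := NormedSpace.exp (s • H) with hE_def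
  have hES : E * S = S * T := by
    ext k i
    have hlhs : (E * S) k i = (E *ᵥ ψ i) k := by
      simp [Matrix.mul_apply, Matrix.mulVec, dotProduct, hS_def]
    rw [hlhs, hexpH]
    have hEv : (lam • ((1 : Matrix (Fin 2) (Fin 2) ℂ) + s • N)) *ᵥ ψ i
        = lam • (ψ i + s • (N *ᵥ ψ i)) := by
      rw [Matrix.smul_mulVec, Matrix.add_mulVec, Matrix.one_mulVec,
        Matrix.smul_mulVec]
    rw [hlam_def] at hEv
    rw [hEv]
    fin_cases i <;> fin_cases k <;>
      simp [hT_def, hS_def, Matrix.mul_apply, Fin.sum_univ_two, hN0, hN1] <;> ring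
  -- rewrite the sums as S * C * Sᴴ
  have hsum : ∀ d : Fin 2 → Fin 2 → ℂ,
      (∑ i, ∑ j, d i j • vecMulVec (ψ i) (star (ψ j))) = S * Matrix.of d * Sᴴ := by
    intro d
    ext k l
    simp only [Matrix.sum_apply, Matrix.add_apply, Matrix.smul_apply, Matrix.vecMulVec_apply,
      Matrix.mul_apply, Matrix.conjTranspose_apply, Fin.sum_univ_two, hS_def,
      Matrix.of_apply, Pi.star_apply, smul_eq_mul]
    ring
  rw [hsum c, hsum c'] at hevol
  -- manipulate hevol
  have hSH : Sᴴ * Eᴴ = Tᴴ * Sᴴ := by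
    rw [← Matrix.conjTranspose_mul, ← Matrix.conjTranspose_mul, hES]
  have hA : E * (S * Matrix.of c * Sᴴ) * Eᴴ = S * (T * Matrix.of c * Tᴴ) * Sᴴ := by
    rw [show E * (S * Matrix.of c * Sᴴ) * Eᴴ = (E * S) * Matrix.of c * (Sᴴ * Eᴴ) by
      simp only [Matrix.mul_assoc], hES, hSH]
    simp only [Matrix.mul_assoc]
  have hkey : S * ((T * Matrix.of c * Tᴴ) * Sᴴ) = S * (Matrix.of c' * Sᴴ) := by
    rw [← Matrix.mul_assoc, ← hA, hevol, Matrix.mul_assoc]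
  have hSHunit : IsUnit Sᴴ := by simpa using hSunit
  have hcancel : T * Matrix.of c * Tᴴ = Matrix.of c' :=
    hSHunit.mul_right_cancel (hSunit.mul_left_cancel hkey)
  -- arithmetic facts
  have hs_star : (starRingEnd ℂ) s = -s := by
    rw [hs_def]
    simp [Complex.conj_ofReal]
  have hlam2 : lam * (starRingEnd ℂ) lam = 1 := by
    rw [hlam_def, ← Complex.exp_conj, ← Complex.exp_add, _root_.map_mul, Complex.conj_ofReal, hs_star]
    have h0 : s * (a : ℂ) + -s * (a : ℂ) = 0 := by ring
    rw [h0, Complex.exp_zero]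
  -- extract entries
  have e01 : (T * Matrix.of c * Tᴴ) 0 1 = c' 0 1 := by rw [hcancel]; rfl
  have e10 : (T * Matrix.of c * Tᴴ) 1 0 = c' 1 0 := by rw [hcancel]; rfl
  rw [← e01, ← e10]
  simp only [hT_def, Matrix.conjTranspose_smul, Matrix.mul_apply, Matrix.smul_apply,
    Matrix.conjTranspose_apply, Fin.sum_univ_two, Matrix.of_apply, smul_eq_mul,
    Matrix.cons_val', Matrix.cons_val_zero, Matrix.cons_val_one, Matrix.head_cons,
    Matrix.head_fin_const, Matrix.empty_val', Matrix.cons_val_fin_one,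
    Complex.star_def, _root_.map_mul, _root_.map_one, _root_.map_zero]
  rw [hs_star]
  linear_combination (c 0 1 + c 1 0) * hlam2
end

section
/- For Bender's Hamiltonian H = [[r e^{iθ}, s],[s, r e^{−iθ}]] with s² − r²sin²θ = 0, s ≠ 0, and sinθ ≠ 0, H is not diagonalizable. -/
/-!
Put `λ = r cos θ`. Then `H - λ = !![i r sin θ, s; s, -i r sin θ]`, whose square is
`(s² - r² sin² θ) • 1 = 0`. A diagonalizable matrix `H` with `H - λ` nilpotent is the scalar
matrix `λ`, since a nilpotent diagonal matrix over a reduced ring vanishes. But the off-diagonal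
entry of `H` is `s ≠ 0`.
-/

open Matrix

namespace Matrix

variable {n R : Type*} [Fintype n] [DecidableEq n] [CommRing R]

lemma diagonal_eq_zero_of_isNilpotent [IsReduced R] {d : n → R} (h : IsNilpotent (diagonal d)) :
    diagonal d = 0 := by
  obtain ⟨k, hk⟩ := h
  rw [diagonal_pow, diagonal_eq_zero] at hk
  rw [diagonal_eq_zero]
  funext i
  exact IsNilpotent.eq_zero ⟨k, congrFun hk i⟩

lemma isNilpotent_inv_mul_mul {N Ψ : Matrix n n R} (hΨ : IsUnit Ψ.det) (hN : IsNilpotent N) :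
    IsNilpotent (Ψ⁻¹ * N * Ψ) := by
  obtain ⟨u, rfl⟩ := (isUnit_iff_isUnit_det Ψ).mpr hΨ
  obtain ⟨k, hk⟩ := hN
  refine ⟨k, ?_⟩
  rw [← coe_units_inv, Units.conj_pow', hk, mul_zero, zero_mul]

lemma eq_scalar_of_isNilpotent_sub_scalar [IsReduced R] {H Ψ : Matrix n n R} {d : n → R} {c : R}
    (hΨ : IsUnit Ψ.det) (hdiag : Ψ⁻¹ * H * Ψ = diagonal d)
    (hN : IsNilpotent (H - scalar n c)) :
    H = scalar n c := by
  have hconj : Ψ⁻¹ * (H - scalar n c) * Ψ = diagonal fun i => d i - c := by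
    rw [mul_sub, sub_mul, hdiag, ← (scalar_commute c (Commute.all c) Ψ⁻¹).eq, mul_assoc,
      nonsing_inv_mul Ψ hΨ, mul_one, scalar_apply, diagonal_sub]
  have hzero : Ψ⁻¹ * (H - scalar n c) * Ψ = 0 := by
    rw [hconj]
    exact diagonal_eq_zero_of_isNilpotent (hconj ▸ isNilpotent_inv_mul_mul hΨ hN)
  have hsub : H - scalar n c = Ψ * (Ψ⁻¹ * (H - scalar n c) * Ψ) * Ψ⁻¹ := by
    rw [← mul_assoc, ← mul_assoc, mul_nonsing_inv Ψ hΨ, one_mul, mul_assoc,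
      mul_nonsing_inv Ψ hΨ, mul_one]
  rw [← sub_eq_zero, hsub, hzero, mul_zero, zero_mul]

lemma sq_traceless_symmetric (a b : R) :
    !![a, b; b, -a] ^ 2 = scalar (Fin 2) (a ^ 2 + b ^ 2) := by
  ext i j
  fin_cases i <;> fin_cases j <;> simp [sq, mul_apply, Fin.sum_univ_two] <;> ring

end Matrix

noncomputable def benderHamiltonian (r s θ : ℝ) : Matrix (Fin 2) (Fin 2) ℂ :=
  !![(r : ℂ) * Complex.exp (Complex.I * θ), (s : ℂ);
     (s : ℂ), (r : ℂ) * Complex.exp (-(Complex.I * θ))]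

lemma benderHamiltonian_sub_scalar (r s θ : ℝ) :
    benderHamiltonian r s θ - scalar (Fin 2) ((r : ℂ) * Complex.cos θ)
      = !![Complex.I * (r * Complex.sin θ), (s : ℂ);
           (s : ℂ), -(Complex.I * (r * Complex.sin θ))] := by
  rw [benderHamiltonian, mul_comm Complex.I, ← neg_mul, Complex.exp_mul_I, Complex.exp_mul_I,
    Complex.cos_neg, Complex.sin_neg]
  ext i j
  fin_cases i <;> fin_cases j <;> simp <;> ring

lemma isNilpotent_benderHamiltonian_sub_scalar {r s θ : ℝ}
    (hcrit : s ^ 2 - r ^ 2 * Real.sin θ ^ 2 = 0) :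
    IsNilpotent (benderHamiltonian r s θ - scalar (Fin 2) ((r : ℂ) * Complex.cos θ)) := by
  refine ⟨2, ?_⟩
  have hsum : (Complex.I * (r * Complex.sin θ)) ^ 2 + (s : ℂ) ^ 2 = 0 := by
    have hcritC : (s : ℂ) ^ 2 - (r : ℂ) ^ 2 * Complex.sin θ ^ 2 = 0 := by exact_mod_cast hcrit
    linear_combination hcritC + (r : ℂ) ^ 2 * Complex.sin θ ^ 2 * Complex.I_sq
  rw [benderHamiltonian_sub_scalar, sq_traceless_symmetric, hsum, map_zero]

theorem bender_hamiltonian_critical_not_diagonalizable_general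
    (r s θ : ℝ)
    (hcrit : s ^ 2 - r ^ 2 * Real.sin θ ^ 2 = 0)
    (hs : s ≠ 0)
    (H : Matrix (Fin 2) (Fin 2) ℂ)
    (hH : H = !![(r : ℂ) * Complex.exp (Complex.I * θ), (s : ℂ);
                 (s : ℂ), (r : ℂ) * Complex.exp (-(Complex.I * θ))]) :
    ¬ ∃ (Ψ : Matrix (Fin 2) (Fin 2) ℂ) (d : Fin 2 → ℂ),
        IsUnit Ψ.det ∧ Ψ⁻¹ * H * Ψ = Matrix.diagonal d := by
  rintro ⟨Ψ, d, hΨ, hdiag⟩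
  replace hH : H = benderHamiltonian r s θ := hH
  have hscalar : H = scalar (Fin 2) ((r : ℂ) * Complex.cos θ) :=
    eq_scalar_of_isNilpotent_sub_scalar hΨ hdiag
      (hH ▸ isNilpotent_benderHamiltonian_sub_scalar hcrit)
  have hoff : H 0 1 = 0 := by simp [hscalar]
  exact hs (by simpa [hH, benderHamiltonian] using hoff)

theorem bender_hamiltonian_critical_not_diagonalizable
    (r s θ : ℝ)
    (hcrit : s ^ 2 - r ^ 2 * Real.sin θ ^ 2 = 0)
    (hs : s ≠ 0) (hsin : Real.sin θ ≠ 0)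
    (H : Matrix (Fin 2) (Fin 2) ℂ)
    (hH : H = !![(r : ℂ) * Complex.exp (Complex.I * θ), (s : ℂ);
                 (s : ℂ), (r : ℂ) * Complex.exp (-(Complex.I * θ))]) :
    ¬ ∃ (Ψ : Matrix (Fin 2) (Fin 2) ℂ) (d : Fin 2 → ℂ),
        IsUnit Ψ.det ∧ Ψ⁻¹ * H * Ψ = Matrix.diagonal d :=
  bender_hamiltonian_critical_not_diagonalizable_general r s θ hcrit hs H hH
end
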